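/- For 0 < α < 1/2 and k ≥ 1, the function g(k,α) = ∑_{l=0}^∞ ((1-2α)/(1-α))·(α/(1-α))^l · [ ∑_{n=0}^{k+l} C(n+k-1,n)·α^k·(1-α)^n + ∑_{n=k+l+1}^∞ C(n+k-1,n)·α^{n-l}·(1-α)^{k+l} ] satisfies 0 < g(k,α) < 1 and g(k,α) → 0 as k → ∞. -/

import Mathlib

open Finset Filter

/-- The Vector76 bound
`g(k,α) = ∑_{l=0}^∞ p_l · [∑_{n=0}^{k+l} C(n+k-1,n) α^k (1-α)^n
  + ∑_{n=k+l+1}^∞ C(n+k-1,n) α^{n-l} (1-α)^{k+l}]`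
with `p_l = ((1-2α)/(1-α))·(α/(1-α))^l`. -/
noncomputable def g (k : ℕ) (α : ℝ) : ℝ :=
  ∑' l : ℕ, ((1 - 2*α)/(1 - α)) * (α/(1 - α))^l *
    ((∑ n ∈ range (k + l + 1), (Nat.choose (n + k - 1) n : ℝ) * α^k * (1 - α)^n) +
     (∑' j : ℕ, (Nat.choose ((j + (k + l + 1)) + k - 1) (j + (k + l + 1)) : ℝ) *
        α^((j + (k + l + 1)) - l) * (1 - α)^(k + l)))

/-! The bracket of `g` is `E[w(N)]` for `N` negative binomial with parameters `k`, `α` and the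
weight `w(n) = (α/(1-α))^(n-k-l)⁺ ∈ (0, 1]`, and the factors `((1-2α)/(1-α))(α/(1-α))^l` form a
probability distribution in `l`; so `g(k,α)` is an average of numbers in `(0, 1)` once `k ≥ 1`.
For the limit, `w(n) ≤ (2(1-α))^(k+l-n)`, and the generating function of `N` at `1/2` bounds the
bracket by `(2α)^k (2(1-α))^(k+l)`; summing over `l` gives `g(k,α) ≤ (4α(1-α))^k / (1-α)`. -/

lemma hasSum_choose_sub_one_mul_pow (k : ℕ) {x : ℝ} (hx : |x| < 1) :
    HasSum (fun n ↦ ((n + k - 1).choose n : ℝ) * x ^ n) ((1 - x) ^ k)⁻¹ := by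
  cases k with
  | zero =>
    simpa using (hasSum_ite_eq 0 (1 : ℝ)).congr_fun fun n ↦ by rcases n with _ | n <;> simp
  | succ k =>
    have h := hasSum_choose_mul_geometric_of_norm_lt_one k (r := x) (by rwa [Real.norm_eq_abs])
    simpa only [Nat.add_succ_sub_one, Nat.choose_symm_add, one_div] using h

noncomputable def negBinomialTerm (k : ℕ) (α : ℝ) (n : ℕ) : ℝ :=
  ((n + k - 1).choose n : ℝ) * α ^ k * (1 - α) ^ n

/-- The truncated subtraction makes the weight `(α/(1-α))^(n-(k+l))` equal to `1` for
`n ≤ k + l`. -/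
noncomputable def catchUpProb (k l : ℕ) (α : ℝ) : ℝ :=
  ∑' n, negBinomialTerm k α n * (α / (1 - α)) ^ (n - (k + l))

noncomputable def leadWeight (α : ℝ) (l : ℕ) : ℝ :=
  (1 - 2*α) / (1 - α) * (α / (1 - α)) ^ l

section

variable {α : ℝ}

lemma hasSum_negBinomialTerm (k : ℕ) (hα : |1 - α| < 1) :
    HasSum (negBinomialTerm k α) 1 := by
  have hα0 : α ≠ 0 := by rintro rfl; simp at hα
  have h := (hasSum_choose_sub_one_mul_pow k hα).mul_left (α ^ k)
  rw [sub_sub_cancel, mul_inv_cancel₀ (pow_ne_zero k hα0)] at h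
  exact h.congr_fun fun n ↦ by unfold negBinomialTerm; ring

lemma negBinomialTerm_pos {k : ℕ} (hk : 1 ≤ k) (hα0 : 0 < α) (hα1 : α < 1) (n : ℕ) :
    0 < negBinomialTerm k α n := by
  have : 0 < ((n + k - 1).choose n : ℝ) := by exact_mod_cast Nat.choose_pos (by omega)
  unfold negBinomialTerm
  have : 0 < 1 - α := by linarith
  positivity

lemma negBinomialTerm_nonneg (k : ℕ) (hα0 : 0 ≤ α) (hα1 : α ≤ 1) (n : ℕ) :
    0 ≤ negBinomialTerm k α n := by
  have : 0 ≤ 1 - α := by linarith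
  unfold negBinomialTerm
  positivity

lemma odds_nonneg (hα0 : 0 ≤ α) (hα : α ≤ 1/2) : 0 ≤ α / (1 - α) :=
  div_nonneg hα0 (by linarith)

lemma odds_le_one (hα : α ≤ 1/2) : α / (1 - α) ≤ 1 :=
  (div_le_one (by linarith)).2 (by linarith)

lemma odds_lt_one (hα : α < 1/2) : α / (1 - α) < 1 :=
  (div_lt_one (by linarith)).2 (by linarith)

lemma catchUpTerm_nonneg (k K n : ℕ) (hα0 : 0 ≤ α) (hα : α ≤ 1/2) :
    0 ≤ negBinomialTerm k α n * (α / (1 - α)) ^ (n - K) :=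
  mul_nonneg (negBinomialTerm_nonneg k hα0 (by linarith) n) (pow_nonneg (odds_nonneg hα0 hα) _)

lemma catchUpTerm_le (k K n : ℕ) (hα0 : 0 ≤ α) (hα : α ≤ 1/2) :
    negBinomialTerm k α n * (α / (1 - α)) ^ (n - K) ≤ negBinomialTerm k α n :=
  mul_le_of_le_one_right (negBinomialTerm_nonneg k hα0 (by linarith) n)
    (pow_le_one₀ (odds_nonneg hα0 hα) (odds_le_one hα))

lemma summable_catchUpTerm (k l : ℕ) (hα0 : 0 < α) (hα : α ≤ 1/2) :
    Summable fun n ↦ negBinomialTerm k α n * (α / (1 - α)) ^ (n - (k + l)) :=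
  (hasSum_negBinomialTerm k (abs_lt.2 ⟨by linarith, by linarith⟩)).summable.of_nonneg_of_le
    (fun n ↦ catchUpTerm_nonneg k _ n hα0.le hα) (fun n ↦ catchUpTerm_le k _ n hα0.le hα)

lemma bracket_eq_catchUpProb (k l : ℕ) (hα0 : 0 < α) (hα : α ≤ 1/2) :
    (∑ n ∈ range (k + l + 1), (Nat.choose (n + k - 1) n : ℝ) * α^k * (1 - α)^n) +
      (∑' j : ℕ, (Nat.choose ((j + (k + l + 1)) + k - 1) (j + (k + l + 1)) : ℝ) *
        α^((j + (k + l + 1)) - l) * (1 - α)^(k + l)) = catchUpProb k l α := by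
  have hβ : 1 - α ≠ 0 := by linarith
  rw [catchUpProb, ← (summable_catchUpTerm k l hα0 hα).sum_add_tsum_nat_add (k + l + 1)]
  congr 1
  · refine sum_congr rfl fun n hn ↦ ?_
    rw [Nat.sub_eq_zero_of_le (show n ≤ k + l by simp at hn; omega), pow_zero, mul_one,
      negBinomialTerm]
  · refine tsum_congr fun j ↦ ?_
    rw [negBinomialTerm, show j + (k + l + 1) - l = k + (j + 1) by omega,
      show j + (k + l + 1) - (k + l) = j + 1 by omega,
      show j + (k + l + 1) = (k + l) + (j + 1) by omega, pow_add, pow_add, div_pow]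
    field_simp
    ring

lemma catchUpProb_nonneg (k l : ℕ) (hα0 : 0 < α) (hα : α ≤ 1/2) : 0 ≤ catchUpProb k l α :=
  tsum_nonneg fun n ↦ catchUpTerm_nonneg k _ n hα0.le hα

lemma catchUpProb_pos {k : ℕ} (hk : 1 ≤ k) (l : ℕ) (hα0 : 0 < α) (hα : α ≤ 1/2) :
    0 < catchUpProb k l α :=
  (summable_catchUpTerm k l hα0 hα).tsum_pos (fun n ↦ catchUpTerm_nonneg k _ n hα0.le hα) 0
    (by simpa using negBinomialTerm_pos hk hα0 (by linarith) 0)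

lemma catchUpProb_lt_one {k : ℕ} (hk : 1 ≤ k) (l : ℕ) (hα0 : 0 < α) (hα : α < 1/2) :
    catchUpProb k l α < 1 := by
  have hNB := hasSum_negBinomialTerm k (α := α) (abs_lt.2 ⟨by linarith, by linarith⟩)
  rw [← hNB.tsum_eq]
  refine (summable_catchUpTerm k l hα0 hα.le).tsum_lt_tsum (i := k + l + 1)
    (fun n ↦ catchUpTerm_le k _ n hα0.le hα.le) ?_ hNB.summable
  rw [show k + l + 1 - (k + l) = 1 by omega, pow_one]
  exact mul_lt_of_lt_one_right (negBinomialTerm_pos hk hα0 (by linarith) _) (odds_lt_one hα)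

lemma two_mul_pow_mul_odds_pow_sub_le (hα0 : 0 ≤ α) (hα : α ≤ 1/2) (n K : ℕ) :
    (2 * (1 - α)) ^ n * (α / (1 - α)) ^ (n - K) ≤ (2 * (1 - α)) ^ K := by
  rcases le_total n K with h | h
  · rw [Nat.sub_eq_zero_of_le h, pow_zero, mul_one]
    exact pow_le_pow_right₀ (by linarith) h
  · obtain ⟨d, rfl⟩ := Nat.exists_eq_add_of_le h
    have hβ : 1 - α ≠ 0 := by linarith
    rw [Nat.add_sub_cancel_left, pow_add, mul_assoc, ← mul_pow,
      show 2 * (1 - α) * (α / (1 - α)) = 2 * α by field_simp]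
    exact mul_le_of_le_one_right (pow_nonneg (by linarith) _)
      (pow_le_one₀ (by positivity) (by linarith))

/-- Chernoff-type bound: the weight `(α/(1-α))^(n-K)` is at most `(2(1-α))^(K-n)`, whose
expectation under the negative binomial law is its generating function at `1/2`. -/
lemma catchUpProb_le (k l : ℕ) (hα0 : 0 < α) (hα : α ≤ 1/2) :
    catchUpProb k l α ≤ (2 * α) ^ k * (2 * (1 - α)) ^ (k + l) := by
  have hhalf := (hasSum_negBinomialTerm k (α := 1/2) (by norm_num [abs_of_pos])).mul_left
    ((2 * α) ^ k * (2 * (1 - α)) ^ (k + l))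
  rw [mul_one] at hhalf
  refine hasSum_le (fun n ↦ ?_) (summable_catchUpTerm k l hα0 hα).hasSum hhalf
  have hpow : (1 - α) ^ n = (1/2) ^ n * (2 * (1 - α)) ^ n := by rw [← mul_pow]; ring_nf
  calc negBinomialTerm k α n * (α / (1 - α)) ^ (n - (k + l))
      = ((n + k - 1).choose n : ℝ) * α ^ k * (1/2) ^ n *
          ((2 * (1 - α)) ^ n * (α / (1 - α)) ^ (n - (k + l))) := by
        rw [negBinomialTerm, hpow]; ring
    _ ≤ ((n + k - 1).choose n : ℝ) * α ^ k * (1/2) ^ n * (2 * (1 - α)) ^ (k + l) :=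
        mul_le_mul_of_nonneg_left (two_mul_pow_mul_odds_pow_sub_le hα0.le hα n (k + l))
          (by positivity)
    _ = (2 * α) ^ k * (2 * (1 - α)) ^ (k + l) * negBinomialTerm k (1/2) n := by
        have h2 : (2:ℝ) ^ k * (1/2) ^ k = 1 := by rw [← mul_pow]; norm_num
        rw [negBinomialTerm, mul_pow 2 α k]
        generalize (2 * (1 - α)) ^ (k + l) = B
        linear_combination -(((n + k - 1).choose n : ℝ) * α ^ k * (1/2) ^ n * B) * h2

lemma hasSum_leadWeight (hα : α < 1/2) : HasSum (leadWeight α) 1 := by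
  have hβ : 1 - α ≠ 0 := by linarith
  have h := (hasSum_geometric_of_abs_lt_one (r := α / (1 - α))
    (abs_lt.2 ⟨by rw [lt_div_iff₀ (by linarith)]; linarith, odds_lt_one hα⟩)).mul_left
    ((1 - 2*α) / (1 - α))
  rwa [show 1 - α / (1 - α) = (1 - 2*α) / (1 - α) by field_simp; ring,
    mul_inv_cancel₀ (div_ne_zero (by linarith) hβ)] at h

lemma leadWeight_pos (hα0 : 0 < α) (hα : α < 1/2) (l : ℕ) : 0 < leadWeight α l := by
  have : 0 < 1 - 2*α := by linarith
  have : 0 < 1 - α := by linarith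
  unfold leadWeight
  positivity

lemma leadWeight_mul_catchUpProb_le (k l : ℕ) (hα0 : 0 < α) (hα : α < 1/2) :
    leadWeight α l * catchUpProb k l α ≤
      (1 - 2*α) / (1 - α) * (4 * α * (1 - α)) ^ k * (2 * α) ^ l := by
  have hβ : 1 - α ≠ 0 := by linarith
  calc leadWeight α l * catchUpProb k l α
      ≤ leadWeight α l * ((2 * α) ^ k * (2 * (1 - α)) ^ (k + l)) :=
        mul_le_mul_of_nonneg_left (catchUpProb_le k l hα0 hα.le) (leadWeight_pos hα0 hα l).le
    _ = (1 - 2*α) / (1 - α) * (4 * α * (1 - α)) ^ k * (2 * α) ^ l := by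
        have h4 : (4 * α * (1 - α)) ^ k = (2 * α) ^ k * (2 * (1 - α)) ^ k := by
          rw [← mul_pow]; ring
        have h2 : (α / (1 - α)) ^ l * (2 * (1 - α)) ^ l = (2 * α) ^ l := by
          rw [← mul_pow]; field_simp
        rw [leadWeight, pow_add, h4, ← h2]
        ring

lemma g_eq_tsum_leadWeight_mul_catchUpProb (k : ℕ) (hα0 : 0 < α) (hα : α ≤ 1/2) :
    g k α = ∑' l, leadWeight α l * catchUpProb k l α := by
  unfold g
  exact tsum_congr fun l ↦ by rw [bracket_eq_catchUpProb k l hα0 hα, leadWeight]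

lemma hasSum_leadWeight_mul_catchUpProb_bound (k : ℕ) (hα0 : 0 < α) (hα : α < 1/2) :
    HasSum (fun l ↦ (1 - 2*α) / (1 - α) * (4 * α * (1 - α)) ^ k * (2 * α) ^ l)
      ((4 * α * (1 - α)) ^ k / (1 - α)) := by
  have h := (hasSum_geometric_of_lt_one (r := 2 * α) (by linarith) (by linarith)).mul_left
    ((1 - 2*α) / (1 - α) * (4 * α * (1 - α)) ^ k)
  have : 1 - 2*α ≠ 0 := by linarith
  have : 1 - α ≠ 0 := by linarith
  rwa [show (1 - 2*α) / (1 - α) * (4 * α * (1 - α)) ^ k * (1 - 2 * α)⁻¹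
    = (4 * α * (1 - α)) ^ k / (1 - α) by field_simp] at h

lemma summable_leadWeight_mul_catchUpProb (k : ℕ) (hα0 : 0 < α) (hα : α < 1/2) :
    Summable fun l ↦ leadWeight α l * catchUpProb k l α :=
  (hasSum_leadWeight_mul_catchUpProb_bound k hα0 hα).summable.of_nonneg_of_le
    (fun l ↦ mul_nonneg (leadWeight_pos hα0 hα l).le (catchUpProb_nonneg k l hα0 hα.le))
    (fun l ↦ leadWeight_mul_catchUpProb_le k l hα0 hα)

lemma g_nonneg (k : ℕ) (hα0 : 0 < α) (hα : α < 1/2) : 0 ≤ g k α := by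
  rw [g_eq_tsum_leadWeight_mul_catchUpProb k hα0 hα.le]
  exact tsum_nonneg fun l ↦
    mul_nonneg (leadWeight_pos hα0 hα l).le (catchUpProb_nonneg k l hα0 hα.le)

lemma g_pos {k : ℕ} (hk : 1 ≤ k) (hα0 : 0 < α) (hα : α < 1/2) : 0 < g k α := by
  rw [g_eq_tsum_leadWeight_mul_catchUpProb k hα0 hα.le]
  exact (summable_leadWeight_mul_catchUpProb k hα0 hα).tsum_pos
    (fun l ↦ mul_nonneg (leadWeight_pos hα0 hα l).le (catchUpProb_nonneg k l hα0 hα.le)) 0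
    (mul_pos (leadWeight_pos hα0 hα 0) (catchUpProb_pos hk 0 hα0 hα.le))

lemma g_lt_one {k : ℕ} (hk : 1 ≤ k) (hα0 : 0 < α) (hα : α < 1/2) : g k α < 1 := by
  rw [g_eq_tsum_leadWeight_mul_catchUpProb k hα0 hα.le, ← (hasSum_leadWeight hα).tsum_eq]
  exact (summable_leadWeight_mul_catchUpProb k hα0 hα).tsum_lt_tsum (i := 0)
    (fun l ↦ mul_le_of_le_one_right (leadWeight_pos hα0 hα l).le
      (catchUpProb_lt_one hk l hα0 hα).le)
    (mul_lt_of_lt_one_right (leadWeight_pos hα0 hα 0) (catchUpProb_lt_one hk 0 hα0 hα))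
    (hasSum_leadWeight hα).summable

lemma g_le (k : ℕ) (hα0 : 0 < α) (hα : α < 1/2) : g k α ≤ (4 * α * (1 - α)) ^ k / (1 - α) := by
  rw [g_eq_tsum_leadWeight_mul_catchUpProb k hα0 hα.le]
  exact hasSum_le (fun l ↦ leadWeight_mul_catchUpProb_le k l hα0 hα)
    (summable_leadWeight_mul_catchUpProb k hα0 hα).hasSum
    (hasSum_leadWeight_mul_catchUpProb_bound k hα0 hα)

end

/-- For `0 < α < 1/2` and `k ≥ 1`, `0 < g(k,α) < 1`, and `g(k,α) → 0` as `k → ∞`. -/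
theorem stmt_12 (α : ℝ) (hα0 : 0 < α) (hα : α < 1/2) :
    (∀ k : ℕ, 1 ≤ k → 0 < g k α ∧ g k α < 1) ∧
    Tendsto (fun k : ℕ => g k α) atTop (nhds 0) := by
  refine ⟨fun k hk ↦ ⟨g_pos hk hα0 hα, g_lt_one hk hα0 hα⟩, ?_⟩
  have hq : 4 * α * (1 - α) < 1 := by nlinarith [sq_nonneg (1 - 2*α)]
  have hlim := (tendsto_pow_atTop_nhds_zero_of_lt_one (by nlinarith) hq).div_const (1 - α)
  rw [zero_div] at hlim
  exact squeeze_zero (fun k ↦ g_nonneg k hα0 hα) (fun k ↦ g_le k hα0 hα) hlim
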